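/- arXiv:1812.04268 — 4 statements merged into one kernel-verified Lean document; each statement's English description precedes it below -/
import Mathlib

section
/- Let (r,Ω²,f̄) be a smooth solution of the spherically symmetric Einstein–massless Vlasov system with cosmological constant Λ < 0 on an open set 𝒰 ⊆ ℝ², let u₁ : ℝ → ℝ be a C¹ function, and let γ : [0,a) → 𝒰 ∩ {u ≥ u₁(v)} be an affinely parametrized, future-directed null geodesic with angular momentum l > 0 such that γ(0) ∈ {u = u₁(v)}. Fix s ∈ [0,a), and for v̄ ∈ [v(γ(0)), v(γ(s))] let s_{v̄} be the unique parameter with v(γ(s_{v̄})) = v̄; assume the region {(u,v) : v(γ(0)) ≤ v ≤ v(γ(s)), u₁(v) ≤ u ≤ u(γ(s_v))} is contained in 𝒰. Then log(Ω²γ̇^u)(s) − log(Ω²γ̇^u)(0) = ∫_{v(γ(0))}^{v(γ(s))} ∫_{u₁(v)}^{u(γ(s_v))} ( (1/2)·((6m̃/r − 1)/r²)·Ω² − 24π T_uv ) du dv + ∫_{v(γ(0))}^{v(γ(s))} ( ∂_v log Ω² − 2∂_v r/r )(u₁(v), v) dv. Symmetrically, if v₁ : ℝ → ℝ is C¹,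 γ : [0,a) → 𝒰 ∩ {v ≥ v₁(u)} is such a geodesic with γ(0) ∈ {v = v₁(u)}, and s_{ū} is defined by u(γ(s_{ū})) = ū with the corresponding region contained in 𝒰, then log(Ω²γ̇^v)(s) − log(Ω²γ̇^v)(0) = ∫_{u(γ(0))}^{u(γ(s))} ∫_{v₁(u)}^{v(γ(s_u))} ( (1/2)·((6m̃/r − 1)/r²)·Ω² − 24π T_uv ) dv du + ∫_{u(γ(0))}^{u(γ(s))} ( ∂_u log Ω² − 2∂_u r/r )(u, v₁(u)) du. -/
/-!
Along `γ`, the geodesic equation and the mass shell relation give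
`d/ds log(Ω²γ̇ᵘ) = h(γ) γ̇ᵛ` with `h = ∂_v log Ω² − 2 ∂_v r / r`, so reparametrising by `v`
the left-hand side is `∫ h(u_γ(v), v) dv`. The wave equations for `∂_u∂_v r²` and
`∂_u∂_v log Ω²` give `∂_u h = (1/2)((6m̃/r − 1)/r²)Ω² − 24π T_uv`, and integrating this in `u`
from `u₁(v)` to `u_γ(v)` yields the first identity. The second is the first for the data with
`u` and `v` exchanged, a symmetry of the wave equations because mixed partials commute.
-/

open Real MeasureTheory Filter Set Topology

noncomputable section

/-- Partial derivative of a function of two real variables in the first (`u`) variable. -/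
def pdu (f : ℝ → ℝ → ℝ) (u v : ℝ) : ℝ := deriv (fun x => f x v) u

/-- Partial derivative of a function of two real variables in the second (`v`) variable. -/
def pdv (f : ℝ → ℝ → ℝ) (u v : ℝ) : ℝ := deriv (fun y => f u y) v

/-- The energy–momentum component
`T_vv = (π/2) r⁻² ∫∫ (Ω²pᵘ)² f̄(u,v;pᵘ,l²/(Ω²r²pᵘ),l) (dpᵘ/pᵘ) l dl`. -/
def Tvv (r Ω2 : ℝ → ℝ → ℝ) (fbar : ℝ → ℝ → ℝ → ℝ → ℝ → ℝ) (u v : ℝ) : ℝ :=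
  π / 2 * ((r u v) ^ 2)⁻¹ *
    ∫ p in Ioi (0 : ℝ), p⁻¹ *
      (∫ l in Ioi (0 : ℝ),
        (Ω2 u v * p) ^ 2 * fbar u v p (l ^ 2 / (Ω2 u v * (r u v) ^ 2 * p)) l * l)

/-- The energy–momentum component
`T_uu = (π/2) r⁻² ∫∫ (Ω²pᵛ)² f̄|_{pᵛ = l²/(Ω²r²pᵘ)} (dpᵘ/pᵘ) l dl`. -/
def Tuu (r Ω2 : ℝ → ℝ → ℝ) (fbar : ℝ → ℝ → ℝ → ℝ → ℝ → ℝ) (u v : ℝ) : ℝ :=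
  π / 2 * ((r u v) ^ 2)⁻¹ *
    ∫ p in Ioi (0 : ℝ), p⁻¹ *
      (∫ l in Ioi (0 : ℝ),
        (Ω2 u v * (l ^ 2 / (Ω2 u v * (r u v) ^ 2 * p))) ^ 2 *
          fbar u v p (l ^ 2 / (Ω2 u v * (r u v) ^ 2 * p)) l * l)

/-- The energy–momentum component
`T_uv = (π/2) r⁻² ∫∫ (Ω²pᵘ)(Ω²pᵛ) f̄|_{pᵛ = l²/(Ω²r²pᵘ)} (dpᵘ/pᵘ) l dl`. -/
def Tuv (r Ω2 : ℝ → ℝ → ℝ) (fbar : ℝ → ℝ → ℝ → ℝ → ℝ → ℝ) (u v : ℝ) : ℝ :=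
  π / 2 * ((r u v) ^ 2)⁻¹ *
    ∫ p in Ioi (0 : ℝ), p⁻¹ *
      (∫ l in Ioi (0 : ℝ),
        (Ω2 u v * p) * (Ω2 u v * (l ^ 2 / (Ω2 u v * (r u v) ^ 2 * p))) *
          fbar u v p (l ^ 2 / (Ω2 u v * (r u v) ^ 2 * p)) l * l)

/-- The Hawking mass `m = (r/2)(1 + 4Ω⁻² ∂ᵤr ∂ᵥr)`. -/
def hawk (r Ω2 : ℝ → ℝ → ℝ) (u v : ℝ) : ℝ :=
  r u v / 2 * (1 + 4 * (Ω2 u v)⁻¹ * pdu r u v * pdv r u v)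

/-- The renormalised Hawking mass `m̃ = m − (1/6)Λr³`. -/
def hawkRen (Λ : ℝ) (r Ω2 : ℝ → ℝ → ℝ) (u v : ℝ) : ℝ :=
  hawk r Ω2 u v - 1 / 6 * Λ * (r u v) ^ 3

/-- `f̄` is constant along the reduced null-geodesic flow restricted to the mass shell
`Ω²pᵘpᵛ = l²/r²`: along any `C¹` solution of the reduced geodesic ODE system lying on the
mass shell and inside `Udom`, the value of `f̄` is conserved. -/
def IsMasslessVlasov (Udom : Set (ℝ × ℝ)) (r Ω2 : ℝ → ℝ → ℝ)
    (fbar : ℝ → ℝ → ℝ → ℝ → ℝ → ℝ) : Prop :=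
  ∀ (l : ℝ) (gu gv pu pv : ℝ → ℝ) (s₀ s₁ : ℝ), s₀ ≤ s₁ →
    (∀ s ∈ Icc s₀ s₁, (gu s, gv s) ∈ Udom) →
    (∀ s ∈ Icc s₀ s₁, HasDerivWithinAt gu (pu s) (Icc s₀ s₁) s) →
    (∀ s ∈ Icc s₀ s₁, HasDerivWithinAt gv (pv s) (Icc s₀ s₁) s) →
    (∀ s ∈ Icc s₀ s₁, HasDerivWithinAt (fun t => Ω2 (gu t) (gv t) * pu t)
      ((pdv (fun a b => Real.log (Ω2 a b)) (gu s) (gv s)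
          - 2 * pdv r (gu s) (gv s) / r (gu s) (gv s)) *
        (l ^ 2 / (r (gu s) (gv s)) ^ 2)) (Icc s₀ s₁) s) →
    (∀ s ∈ Icc s₀ s₁, HasDerivWithinAt (fun t => Ω2 (gu t) (gv t) * pv t)
      ((pdu (fun a b => Real.log (Ω2 a b)) (gu s) (gv s)
          - 2 * pdu r (gu s) (gv s) / r (gu s) (gv s)) *
        (l ^ 2 / (r (gu s) (gv s)) ^ 2)) (Icc s₀ s₁) s) →
    (∀ s ∈ Icc s₀ s₁,
      Ω2 (gu s) (gv s) * pu s * pv s = l ^ 2 / (r (gu s) (gv s)) ^ 2) →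
    fbar (gu s₀) (gv s₀) (pu s₀) (pv s₀) l = fbar (gu s₁) (gv s₁) (pu s₁) (pv s₁) l

/-- A massless Vlasov field on the background `(r,Ω²)` over `Udom`: `r, Ω²` are positive
and smooth on `Udom`, `f̄` is smooth, nonnegative, compactly supported in momentum locally
uniformly, and constant along the reduced null-geodesic flow on the mass shell. -/
structure VlasovField (Udom : Set (ℝ × ℝ)) (r Ω2 : ℝ → ℝ → ℝ)
    (fbar : ℝ → ℝ → ℝ → ℝ → ℝ → ℝ) : Prop where
  r_pos : ∀ p ∈ Udom, 0 < r p.1 p.2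
  Ω2_pos : ∀ p ∈ Udom, 0 < Ω2 p.1 p.2
  r_smooth : ContDiffOn ℝ (⊤ : ℕ∞) (fun p : ℝ × ℝ => r p.1 p.2) Udom
  Ω2_smooth : ContDiffOn ℝ (⊤ : ℕ∞) (fun p : ℝ × ℝ => Ω2 p.1 p.2) Udom
  fbar_nonneg : ∀ u v pu pv l, 0 ≤ fbar u v pu pv l
  fbar_smooth : ContDiffOn ℝ (⊤ : ℕ∞)
      (fun q : (ℝ × ℝ) × ℝ × ℝ × ℝ => fbar q.1.1 q.1.2 q.2.1 q.2.2.1 q.2.2.2)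
      (Udom ×ˢ (Ioi (0 : ℝ) ×ˢ (Ioi (0 : ℝ) ×ˢ Ioi (0 : ℝ))))
  fbar_compactSupport : ∀ K : Set (ℝ × ℝ), IsCompact K → K ⊆ Udom →
      ∃ C : Set (ℝ × ℝ × ℝ), IsCompact C ∧
        C ⊆ Ioi (0 : ℝ) ×ˢ (Ioi (0 : ℝ) ×ˢ Ioi (0 : ℝ)) ∧
        ∀ p ∈ K, ∀ q : ℝ × ℝ × ℝ, q ∉ C → fbar p.1 p.2 q.1 q.2.1 q.2.2 = 0
  vlasov : IsMasslessVlasov Udom r Ω2 fbar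

/-- A smooth solution of the spherically symmetric Einstein–massless Vlasov system with
cosmological constant `Λ` on `Udom`. -/
structure EinsteinVlasov (Λ : ℝ) (Udom : Set (ℝ × ℝ)) (r Ω2 : ℝ → ℝ → ℝ)
    (fbar : ℝ → ℝ → ℝ → ℝ → ℝ → ℝ) : Prop where
  field : VlasovField Udom r Ω2 fbar
  wave_r : ∀ p ∈ Udom,
    pdu (fun a b => pdv (fun x y => (r x y) ^ 2) a b) p.1 p.2 =
      -(1 / 2) * (1 - Λ * (r p.1 p.2) ^ 2) * Ω2 p.1 p.2 +
        8 * π * (r p.1 p.2) ^ 2 * Tuv r Ω2 fbar p.1 p.2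
  wave_Ω : ∀ p ∈ Udom,
    pdu (fun a b => pdv (fun x y => Real.log (Ω2 x y)) a b) p.1 p.2 =
      Ω2 p.1 p.2 / (2 * (r p.1 p.2) ^ 2) *
          (1 + 4 * (Ω2 p.1 p.2)⁻¹ * pdu r p.1 p.2 * pdv r p.1 p.2) -
        16 * π * Tuv r Ω2 fbar p.1 p.2
  constraint_u : ∀ p ∈ Udom,
    pdu (fun a b => (Ω2 a b)⁻¹ * pdu r a b) p.1 p.2 =
      -4 * π * r p.1 p.2 * Tuu r Ω2 fbar p.1 p.2 * (Ω2 p.1 p.2)⁻¹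
  constraint_v : ∀ p ∈ Udom,
    pdv (fun a b => (Ω2 a b)⁻¹ * pdv r a b) p.1 p.2 =
      -4 * π * r p.1 p.2 * Tvv r Ω2 fbar p.1 p.2 * (Ω2 p.1 p.2)⁻¹

/-- The double-null domain `𝒰_{U;v_I} = {0 ≤ u < U, u < v < u + v_I}`. -/
def domUV (U vI : ℝ) : Set (ℝ × ℝ) :=
  {p : ℝ × ℝ | 0 ≤ p.1 ∧ p.1 < U ∧ p.1 < p.2 ∧ p.2 < p.1 + vI}

/-- The axis `{u = v}` of the domain `𝒰_{U;v_I}`. -/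
def axisSet (U : ℝ) : Set (ℝ × ℝ) := {p : ℝ × ℝ | 0 ≤ p.1 ∧ p.1 < U ∧ p.2 = p.1}

/-- Conformal infinity `{v = u + v_I}` of the domain `𝒰_{U;v_I}`. -/
def scriSet (U vI : ℝ) : Set (ℝ × ℝ) :=
  {p : ℝ × ℝ | 0 ≤ p.1 ∧ p.1 < U ∧ p.2 = p.1 + vI}

/-- The solution `(r,Ω²)` on `𝒰_{U;v_I}` has a smooth axis `{u = v}` and smooth conformal
infinity `{v = u + v_I}`: `r → 0` and `m̃ → 0` at the axis, `1/r` extends smoothly to `0`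
at infinity, `Ω²/(1−(1/3)Λr²)` extends smoothly and positively to both boundaries, and the
boundary conditions `(∂_u+∂_v)r = 0`, `(∂_v−∂_u)Ω² = 0` hold at the axis while
`(∂_u+∂_v)(1/r) = 0`, `(∂_v−∂_u)(Ω²/(1−(1/3)Λr²)) = 0` hold at infinity. -/
structure SmoothAxisInfinity (Λ U vI : ℝ) (r Ω2 : ℝ → ℝ → ℝ) : Prop where
  r_axis : ∀ q ∈ axisSet U, Tendsto (fun p : ℝ × ℝ => r p.1 p.2)
      (nhdsWithin q (domUV U vI)) (nhds 0)
  rinv_scri : ∃ R : ℝ × ℝ → ℝ,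
      ContDiffOn ℝ (⊤ : ℕ∞) R (domUV U vI ∪ scriSet U vI) ∧
      (∀ p ∈ domUV U vI, R p = (r p.1 p.2)⁻¹) ∧ ∀ p ∈ scriSet U vI, R p = 0
  Ωren_ext : ∃ W : ℝ × ℝ → ℝ,
      ContDiffOn ℝ (⊤ : ℕ∞) W (domUV U vI ∪ axisSet U ∪ scriSet U vI) ∧
      (∀ p ∈ domUV U vI, W p = Ω2 p.1 p.2 / (1 - Λ / 3 * (r p.1 p.2) ^ 2)) ∧
      (∀ p ∈ axisSet U ∪ scriSet U vI, 0 < W p)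
  mtilde_axis : ∀ q ∈ axisSet U,
      Tendsto (fun p : ℝ × ℝ => hawkRen Λ r Ω2 p.1 p.2)
        (nhdsWithin q (domUV U vI)) (nhds 0)
  bc_r_axis : ∀ q ∈ axisSet U,
      Tendsto (fun p : ℝ × ℝ => pdu r p.1 p.2 + pdv r p.1 p.2)
        (nhdsWithin q (domUV U vI)) (nhds 0)
  bc_Ω_axis : ∀ q ∈ axisSet U,
      Tendsto (fun p : ℝ × ℝ => pdv Ω2 p.1 p.2 - pdu Ω2 p.1 p.2)
        (nhdsWithin q (domUV U vI)) (nhds 0)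
  bc_r_scri : ∀ q ∈ scriSet U vI,
      Tendsto (fun p : ℝ × ℝ =>
          pdu (fun a b => (r a b)⁻¹) p.1 p.2 + pdv (fun a b => (r a b)⁻¹) p.1 p.2)
        (nhdsWithin q (domUV U vI)) (nhds 0)
  bc_Ω_scri : ∀ q ∈ scriSet U vI,
      Tendsto (fun p : ℝ × ℝ =>
          pdv (fun a b => Ω2 a b / (1 - Λ / 3 * (r a b) ^ 2)) p.1 p.2 -
            pdu (fun a b => Ω2 a b / (1 - Λ / 3 * (r a b) ^ 2)) p.1 p.2)
        (nhdsWithin q (domUV U vI)) (nhds 0)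

/-- The parameter interval `[0, a)` with extended-real right endpoint. -/
def IcoE (a : EReal) : Set ℝ := {s : ℝ | 0 ≤ s ∧ (s : EReal) < a}

/-- An affinely parametrized, future-directed null geodesic with angular momentum `l > 0`
on the background `(r,Ω²)`, defined on the parameter set `S` and taking values in `Udom`:
a `C¹` curve `(gu, gv)` with positive derivative components `(du, dv)`, lying on the mass
shell and solving the reduced null-geodesic equations. -/
structure NullGeodesic (Udom : Set (ℝ × ℝ)) (r Ω2 : ℝ → ℝ → ℝ)
    (S : Set ℝ) (gu gv du dv : ℝ → ℝ) (l : ℝ) : Prop where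
  l_pos : 0 < l
  mem : ∀ s ∈ S, (gu s, gv s) ∈ Udom
  du_pos : ∀ s ∈ S, 0 < du s
  dv_pos : ∀ s ∈ S, 0 < dv s
  du_cont : ContinuousOn du S
  dv_cont : ContinuousOn dv S
  deriv_u : ∀ s ∈ S, HasDerivWithinAt gu (du s) S s
  deriv_v : ∀ s ∈ S, HasDerivWithinAt gv (dv s) S s
  shell : ∀ s ∈ S,
    Ω2 (gu s) (gv s) * du s * dv s = l ^ 2 / (r (gu s) (gv s)) ^ 2
  geo_u : ∀ s ∈ S, HasDerivWithinAt (fun t => Ω2 (gu t) (gv t) * du t)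
      ((pdv (fun a b => Real.log (Ω2 a b)) (gu s) (gv s)
          - 2 * pdv r (gu s) (gv s) / r (gu s) (gv s)) *
        (l ^ 2 / (r (gu s) (gv s)) ^ 2)) S s
  geo_v : ∀ s ∈ S, HasDerivWithinAt (fun t => Ω2 (gu t) (gv t) * dv t)
      ((pdu (fun a b => Real.log (Ω2 a b)) (gu s) (gv s)
          - 2 * pdu r (gu s) (gv s) / r (gu s) (gv s)) *
        (l ^ 2 / (r (gu s) (gv s)) ^ 2)) S s

/-- The geodesic `γ : [0,a) → Udom` is future-inextendible in `Udom`: it admits no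
extension to a null geodesic in `Udom` defined on a strictly larger interval `[0,a')`. -/
def FutureInextendible (Udom : Set (ℝ × ℝ)) (r Ω2 : ℝ → ℝ → ℝ)
    (a : EReal) (gu gv du dv : ℝ → ℝ) (l : ℝ) : Prop :=
  ¬ ∃ (a' : EReal) (gu' gv' du' dv' : ℝ → ℝ), a < a' ∧
      NullGeodesic Udom r Ω2 (IcoE a') gu' gv' du' dv' l ∧
      ∀ s ∈ IcoE a, gu' s = gu s ∧ gv' s = gv s ∧ du' s = du s ∧ dv' s = dv s


section PartialDerivatives

variable {U : Set (ℝ × ℝ)} {f : ℝ → ℝ → ℝ} {u v : ℝ} {n : WithTop ℕ∞}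

theorem hasDerivAt_pdu (hf : DifferentiableAt ℝ (fun p : ℝ × ℝ => f p.1 p.2) (u, v)) :
    HasDerivAt (fun x => f x v) (pdu f u v) u :=
  (hf.comp (𝕜 := ℝ) (g := fun p : ℝ × ℝ => f p.1 p.2) u
    (differentiableAt_id.prodMk (differentiableAt_const v))).hasDerivAt

theorem hasDerivAt_pdv (hf : DifferentiableAt ℝ (fun p : ℝ × ℝ => f p.1 p.2) (u, v)) :
    HasDerivAt (fun y => f u y) (pdv f u v) v :=
  (hf.comp (𝕜 := ℝ) (g := fun p : ℝ × ℝ => f p.1 p.2) v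
    ((differentiableAt_const u).prodMk differentiableAt_id)).hasDerivAt

theorem pdu_eq_fderiv (hf : DifferentiableAt ℝ (fun p : ℝ × ℝ => f p.1 p.2) (u, v)) :
    pdu f u v = fderiv ℝ (fun p : ℝ × ℝ => f p.1 p.2) (u, v) (1, 0) :=
  (hf.hasFDerivAt.comp_hasDerivAt (l := fun p : ℝ × ℝ => f p.1 p.2) u
    ((hasDerivAt_id u).prodMk (hasDerivAt_const u v))).deriv

theorem pdv_eq_fderiv (hf : DifferentiableAt ℝ (fun p : ℝ × ℝ => f p.1 p.2) (u, v)) :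
    pdv f u v = fderiv ℝ (fun p : ℝ × ℝ => f p.1 p.2) (u, v) (0, 1) :=
  (hf.hasFDerivAt.comp_hasDerivAt (l := fun p : ℝ × ℝ => f p.1 p.2) v
    ((hasDerivAt_const v u).prodMk (hasDerivAt_id v))).deriv

theorem contDiffOn_pdu {m : WithTop ℕ∞} (hU : IsOpen U)
    (hf : ContDiffOn ℝ n (fun p : ℝ × ℝ => f p.1 p.2) U) (hmn : m + 1 ≤ n) :
    ContDiffOn ℝ m (fun p : ℝ × ℝ => pdu f p.1 p.2) U :=
  ((hf.fderiv_of_isOpen hU hmn).clm_apply contDiffOn_const).congr fun p hp =>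
    pdu_eq_fderiv ((hf.differentiableOn (by rintro rfl; simp at hmn)).differentiableAt
      (hU.mem_nhds hp))

theorem contDiffOn_pdv {m : WithTop ℕ∞} (hU : IsOpen U)
    (hf : ContDiffOn ℝ n (fun p : ℝ × ℝ => f p.1 p.2) U) (hmn : m + 1 ≤ n) :
    ContDiffOn ℝ m (fun p : ℝ × ℝ => pdv f p.1 p.2) U :=
  ((hf.fderiv_of_isOpen hU hmn).clm_apply contDiffOn_const).congr fun p hp =>
    pdv_eq_fderiv ((hf.differentiableOn (by rintro rfl; simp at hmn)).differentiableAt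
      (hU.mem_nhds hp))

theorem pdu_pdv_eq_fderiv_fderiv (hU : IsOpen U)
    (hf : ContDiffOn ℝ n (fun p : ℝ × ℝ => f p.1 p.2) U) (hn : 2 ≤ n) (hp : (u, v) ∈ U) :
    pdu (fun a b => pdv f a b) u v =
      fderiv ℝ (fderiv ℝ (fun p : ℝ × ℝ => f p.1 p.2)) (u, v) (1, 0) (0, 1) := by
  have hf' : DifferentiableOn ℝ (fun p : ℝ × ℝ => f p.1 p.2) U :=
    hf.differentiableOn (by rintro rfl; simp at hn)
  have hslice : (fun p : ℝ × ℝ => pdv f p.1 p.2) =ᶠ[𝓝 (u, v)]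
      fun p => fderiv ℝ (fun p : ℝ × ℝ => f p.1 p.2) p (0, 1) :=
    eventually_of_mem (hU.mem_nhds hp) fun q hq =>
      pdv_eq_fderiv (hf'.differentiableAt (hU.mem_nhds hq))
  have hD : DifferentiableAt ℝ (fderiv ℝ (fun p : ℝ × ℝ => f p.1 p.2)) (u, v) :=
    ((hf.fderiv_of_isOpen hU (m := 1) hn).differentiableOn one_ne_zero).differentiableAt
      (hU.mem_nhds hp)
  rw [pdu_eq_fderiv ((hD.clm_apply (differentiableAt_const _)).congr_of_eventuallyEq hslice),
    hslice.fderiv_eq, fderiv_clm_apply hD (differentiableAt_const _)]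
  simp

theorem pdv_pdu_eq_fderiv_fderiv (hU : IsOpen U)
    (hf : ContDiffOn ℝ n (fun p : ℝ × ℝ => f p.1 p.2) U) (hn : 2 ≤ n) (hp : (u, v) ∈ U) :
    pdv (fun a b => pdu f a b) u v =
      fderiv ℝ (fderiv ℝ (fun p : ℝ × ℝ => f p.1 p.2)) (u, v) (0, 1) (1, 0) := by
  have hf' : DifferentiableOn ℝ (fun p : ℝ × ℝ => f p.1 p.2) U :=
    hf.differentiableOn (by rintro rfl; simp at hn)
  have hslice : (fun p : ℝ × ℝ => pdu f p.1 p.2) =ᶠ[𝓝 (u, v)]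
      fun p => fderiv ℝ (fun p : ℝ × ℝ => f p.1 p.2) p (1, 0) :=
    eventually_of_mem (hU.mem_nhds hp) fun q hq =>
      pdu_eq_fderiv (hf'.differentiableAt (hU.mem_nhds hq))
  have hD : DifferentiableAt ℝ (fderiv ℝ (fun p : ℝ × ℝ => f p.1 p.2)) (u, v) :=
    ((hf.fderiv_of_isOpen hU (m := 1) hn).differentiableOn one_ne_zero).differentiableAt
      (hU.mem_nhds hp)
  rw [pdv_eq_fderiv ((hD.clm_apply (differentiableAt_const _)).congr_of_eventuallyEq hslice),
    hslice.fderiv_eq, fderiv_clm_apply hD (differentiableAt_const _)]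
  simp

theorem pdu_pdv_comm (hU : IsOpen U) (hf : ContDiffOn ℝ n (fun p : ℝ × ℝ => f p.1 p.2) U)
    (hn : 2 ≤ n) (hp : (u, v) ∈ U) :
    pdu (fun a b => pdv f a b) u v = pdv (fun a b => pdu f a b) u v := by
  rw [pdu_pdv_eq_fderiv_fderiv hU hf hn hp, pdv_pdu_eq_fderiv_fderiv hU hf hn hp]
  exact (hf.contDiffAt (hU.mem_nhds hp)).isSymmSndFDerivAt (by simpa using hn) _ _

theorem pdu_pdv_sq (hU : IsOpen U) (hf : ContDiffOn ℝ n (fun p : ℝ × ℝ => f p.1 p.2) U)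
    (hn : 2 ≤ n) (hp : (u, v) ∈ U) :
    pdu (fun a b => pdv (fun x y => f x y ^ 2) a b) u v =
      2 * (pdu f u v * pdv f u v + f u v * pdu (fun a b => pdv f a b) u v) := by
  have hf' : DifferentiableOn ℝ (fun p : ℝ × ℝ => f p.1 p.2) U :=
    hf.differentiableOn (by rintro rfl; simp at hn)
  have hpdv : DifferentiableOn ℝ (fun p : ℝ × ℝ => pdv f p.1 p.2) U :=
    (contDiffOn_pdv (m := 1) hU hf hn).differentiableOn one_ne_zero
  have hslice : (fun x => pdv (fun x y => f x y ^ 2) x v) =ᶠ[𝓝 u]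
      fun x => 2 * (f x v * pdv f x v) := by
    filter_upwards [(hU.preimage (continuous_id.prodMk continuous_const)).mem_nhds hp]
      with x (hx : (x, v) ∈ U)
    show deriv (fun y => f x y ^ 2) v = _
    rw [((hasDerivAt_pdv (hf'.differentiableAt (hU.mem_nhds hx))).fun_pow 2).deriv]
    ring
  refine HasDerivAt.deriv (HasDerivAt.congr_of_eventuallyEq ?_ hslice)
  exact (((hasDerivAt_pdu (hf'.differentiableAt (hU.mem_nhds hp))).mul
    (hasDerivAt_pdu (f := pdv f) (hpdv.differentiableAt (hU.mem_nhds hp)))).const_mul 2)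

end PartialDerivatives

section MonotoneSubstitution

variable {a b : ℝ} {g g' σ : ℝ → ℝ}

theorem integral_mul_deriv_eq_integral_comp_of_rightInvOn (hab : a ≤ b)
    (hg : ContinuousOn g (Icc a b)) (hg' : ∀ t ∈ Ioo a b, HasDerivAt g (g' t) t)
    (hg'_nonneg : ∀ t ∈ Ioo a b, 0 ≤ g' t) (hσg : RightInvOn g σ (Icc a b)) (φ : ℝ → ℝ) :
    ∫ t in a..b, φ t * g' t = ∫ w in g a..g b, φ (σ w) := by
  rw [← intervalIntegral.integral_deriv_smul_comp_of_deriv_nonneg (g := fun w => φ (σ w))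
    (by rwa [uIcc_of_le hab]) (by simpa [hab] using hg') (by simpa [hab] using hg'_nonneg)]
  refine intervalIntegral.integral_congr fun t ht => ?_
  rw [uIcc_of_le hab] at ht
  simp [hσg ht, mul_comm]

theorem intervalIntegrable_comp_of_rightInvOn (hab : a ≤ b)
    (hg : ContinuousOn g (Icc a b)) (hg' : ∀ t ∈ Ioo a b, HasDerivAt g (g' t) t)
    (hg'_nonneg : ∀ t ∈ Ioo a b, 0 ≤ g' t) (hg'_cont : ContinuousOn g' (Icc a b))
    (hσg : RightInvOn g σ (Icc a b)) {φ : ℝ → ℝ} (hφ : ContinuousOn φ (Icc a b)) :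
    IntervalIntegrable (fun w => φ (σ w)) volume (g a) (g b) := by
  refine (intervalIntegral.integrable_deriv_smul_comp_iff_of_deriv_nonneg
    (by rwa [uIcc_of_le hab]) (by simpa [hab] using hg') (by simpa [hab] using hg'_nonneg)).mp ?_
  refine ((hg'_cont.mul hφ).congr fun t ht => ?_).intervalIntegrable_of_Icc hab
  simp [hσg ht]

end MonotoneSubstitution

theorem sub_eq_integral_integral_add_integral {U : Set (ℝ × ℝ)} {h F : ℝ → ℝ → ℝ}
    (hh : ContinuousOn (fun p : ℝ × ℝ => h p.1 p.2) U)
    (hF : ContinuousOn (fun p : ℝ × ℝ => F p.1 p.2) U)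
    (hhF : ∀ p ∈ U, HasDerivAt (fun x => h x p.2) (F p.1 p.2) p.1)
    {a b : ℝ} (hab : a ≤ b) {G gu gv dv σ u₁ : ℝ → ℝ}
    (hG : ContinuousOn G (Icc a b)) (hG' : ∀ t ∈ Ioo a b, HasDerivAt G (h (gu t) (gv t) * dv t) t)
    (hγ : ∀ t ∈ Icc a b, (gu t, gv t) ∈ U)
    (hgu : ContinuousOn gu (Icc a b)) (hgv : ContinuousOn gv (Icc a b))
    (hgv' : ∀ t ∈ Ioo a b, HasDerivAt gv (dv t) t) (hdv : ∀ t ∈ Ioo a b, 0 < dv t)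
    (hdv_cont : ContinuousOn dv (Icc a b))
    (hσ : MapsTo σ (Icc (gv a) (gv b)) (Icc a b)) (hgvσ : LeftInvOn gv σ (Icc (gv a) (gv b)))
    (hu₁ : ContinuousOn u₁ (Icc (gv a) (gv b)))
    (hu₁σ : ∀ w ∈ Icc (gv a) (gv b), u₁ w ≤ gu (σ w))
    (hregion : ∀ w ∈ Icc (gv a) (gv b), ∀ x ∈ Icc (u₁ w) (gu (σ w)), (x, w) ∈ U) :
    G b - G a =
      (∫ w in gv a..gv b, ∫ x in u₁ w..gu (σ w), F x w) + ∫ w in gv a..gv b, h (u₁ w) w := by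
  have hmono : StrictMonoOn gv (Icc a b) := strictMonoOn_of_hasDerivWithinAt_pos
    (convex_Icc a b) hgv (by simpa using fun t ht => (hgv' t ht).hasDerivWithinAt)
    (by simpa using hdv)
  have hσgv : RightInvOn gv σ (Icc a b) :=
    hmono.injOn.rightInvOn_of_leftInvOn hgvσ hmono.monotoneOn.mapsTo_Icc hσ
  have hgv_le : gv a ≤ gv b := hmono.monotoneOn (left_mem_Icc.2 hab) (right_mem_Icc.2 hab) hab
  have hcurve : ContinuousOn (fun t => h (gu t) (gv t)) (Icc a b) :=
    hh.comp (hgu.prodMk hgv) hγ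
  have hdv_nonneg : ∀ t ∈ Ioo a b, 0 ≤ dv t := fun t ht => (hdv t ht).le
  have hG_sub : G b - G a = ∫ w in gv a..gv b, h (gu (σ w)) (gv (σ w)) := by
    rw [← integral_mul_deriv_eq_integral_comp_of_rightInvOn hab hgv hgv' hdv_nonneg hσgv
      (fun t => h (gu t) (gv t)), intervalIntegral.integral_eq_sub_of_hasDerivAt_of_le hab hG hG'
        ((hcurve.mul hdv_cont).intervalIntegrable_of_Icc hab)]
  have hinner : ∀ w ∈ Icc (gv a) (gv b),
      ∫ x in u₁ w..gu (σ w), F x w = h (gu (σ w)) (gv (σ w)) - h (u₁ w) w := by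
    intro w hw
    rw [hgvσ hw]
    have hseg : ∀ x ∈ uIcc (u₁ w) (gu (σ w)), (x, w) ∈ U := fun x hx =>
      hregion w hw x (by rwa [uIcc_of_le (hu₁σ w hw)] at hx)
    refine intervalIntegral.integral_eq_sub_of_hasDerivAt (f := fun x => h x w)
      (fun x hx => hhF _ (hseg x hx)) ?_
    exact (hF.comp (Continuous.continuousOn (by fun_prop)) hseg).intervalIntegrable
  have hupper : IntervalIntegrable (fun w => h (gu (σ w)) (gv (σ w))) volume (gv a) (gv b) :=
    intervalIntegrable_comp_of_rightInvOn hab hgv hgv' hdv_nonneg hdv_cont hσgv hcurve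
  have hlower : IntervalIntegrable (fun w => h (u₁ w) w) volume (gv a) (gv b) :=
    (hh.comp (hu₁.prodMk continuousOn_id) fun w hw => hregion w hw _
      ⟨le_rfl, hu₁σ w hw⟩).intervalIntegrable_of_Icc hgv_le
  rw [intervalIntegral.integral_congr (g := fun w => h (gu (σ w)) (gv (σ w)) - h (u₁ w) w)
      fun w hw => hinner w (by rwa [uIcc_of_le hgv_le] at hw),
    intervalIntegral.integral_sub hupper hlower, hG_sub]
  ring

def geodesicCoeff (r Ω2 : ℝ → ℝ → ℝ) (u v : ℝ) : ℝ :=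
  pdv (fun a b => Real.log (Ω2 a b)) u v - 2 * pdv r u v / r u v

def massSource (Λ : ℝ) (r Ω2 T : ℝ → ℝ → ℝ) (u v : ℝ) : ℝ :=
  1 / 2 * ((6 * hawkRen Λ r Ω2 u v / r u v - 1) / (r u v) ^ 2) * Ω2 u v - 24 * π * T u v

theorem massSource_swap (Λ : ℝ) (r Ω2 T : ℝ → ℝ → ℝ) (u v : ℝ) :
    massSource Λ (fun c d => r d c) (fun c d => Ω2 d c) (fun c d => T d c) u v =
      massSource Λ r Ω2 T v u := by
  unfold massSource hawkRen hawk pdu pdv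
  ring

/-- The wave equations for `r` and `log Ω²` with an arbitrary source `T` in place of `T_uv`;
unlike `EinsteinVlasov`, this system is invariant under exchanging `u` and `v`. -/
structure WaveSystem (Λ : ℝ) (U : Set (ℝ × ℝ)) (r Ω2 T : ℝ → ℝ → ℝ) : Prop where
  isOpen : IsOpen U
  r_pos : ∀ p ∈ U, 0 < r p.1 p.2
  Ω2_pos : ∀ p ∈ U, 0 < Ω2 p.1 p.2
  r_smooth : ContDiffOn ℝ (⊤ : ℕ∞) (fun p : ℝ × ℝ => r p.1 p.2) U
  Ω2_smooth : ContDiffOn ℝ (⊤ : ℕ∞) (fun p : ℝ × ℝ => Ω2 p.1 p.2) U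
  wave_r : ∀ p ∈ U,
    pdu (fun a b => pdv (fun x y => (r x y) ^ 2) a b) p.1 p.2 =
      -(1 / 2) * (1 - Λ * (r p.1 p.2) ^ 2) * Ω2 p.1 p.2 +
        8 * π * (r p.1 p.2) ^ 2 * T p.1 p.2
  wave_Ω : ∀ p ∈ U,
    pdu (fun a b => pdv (fun x y => Real.log (Ω2 x y)) a b) p.1 p.2 =
      Ω2 p.1 p.2 / (2 * (r p.1 p.2) ^ 2) *
          (1 + 4 * (Ω2 p.1 p.2)⁻¹ * pdu r p.1 p.2 * pdv r p.1 p.2) -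
        16 * π * T p.1 p.2

theorem EinsteinVlasov.toWaveSystem {Λ : ℝ} {U : Set (ℝ × ℝ)} {r Ω2 : ℝ → ℝ → ℝ}
    {fbar : ℝ → ℝ → ℝ → ℝ → ℝ → ℝ} (hEV : EinsteinVlasov Λ U r Ω2 fbar) (hU : IsOpen U) :
    WaveSystem Λ U r Ω2 (Tuv r Ω2 fbar) :=
  ⟨hU, hEV.field.r_pos, hEV.field.Ω2_pos, hEV.field.r_smooth, hEV.field.Ω2_smooth,
    hEV.wave_r, hEV.wave_Ω⟩

namespace WaveSystem

variable {Λ : ℝ} {U : Set (ℝ × ℝ)} {r Ω2 T : ℝ → ℝ → ℝ} {u v : ℝ}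

theorem logΩ2_smooth (W : WaveSystem Λ U r Ω2 T) :
    ContDiffOn ℝ (⊤ : ℕ∞) (fun p : ℝ × ℝ => Real.log (Ω2 p.1 p.2)) U :=
  W.Ω2_smooth.log fun p hp => (W.Ω2_pos p hp).ne'

theorem swap (W : WaveSystem Λ U r Ω2 T) :
    WaveSystem Λ (Prod.swap ⁻¹' U) (fun c d => r d c) (fun c d => Ω2 d c) (fun c d => T d c) where
  isOpen := W.isOpen.preimage continuous_swap
  r_pos p hp := W.r_pos p.swap hp
  Ω2_pos p hp := W.Ω2_pos p.swap hp
  r_smooth := W.r_smooth.comp (contDiff_snd.prodMk contDiff_fst).contDiffOn fun _ hp => hp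
  Ω2_smooth := W.Ω2_smooth.comp (contDiff_snd.prodMk contDiff_fst).contDiffOn fun _ hp => hp
  wave_r := by
    rintro ⟨u, v⟩ hp
    rw [← W.wave_r (v, u) hp]
    exact (pdu_pdv_comm W.isOpen (W.r_smooth.pow 2) (WithTop.coe_le_coe.mpr le_top) hp).symm
  wave_Ω := by
    rintro ⟨u, v⟩ hp
    show pdv (fun a b => pdu (fun x y => Real.log (Ω2 x y)) a b) v u = _
    rw [← pdu_pdv_comm W.isOpen W.logΩ2_smooth (WithTop.coe_le_coe.mpr le_top) hp,
      W.wave_Ω (v, u) hp]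
    unfold pdu pdv
    ring

theorem r_mul_pdu_pdv_r (W : WaveSystem Λ U r Ω2 T) (hp : (u, v) ∈ U) :
    r u v * pdu (fun a b => pdv r a b) u v =
      -(1 / 4) * (1 - Λ * r u v ^ 2) * Ω2 u v + 4 * π * r u v ^ 2 * T u v -
        pdu r u v * pdv r u v := by
  have h := W.wave_r (u, v) hp
  rw [pdu_pdv_sq W.isOpen W.r_smooth (WithTop.coe_le_coe.mpr le_top) hp] at h
  linarith

theorem contDiffOn_pdv_logΩ2 (W : WaveSystem Λ U r Ω2 T) :
    ContDiffOn ℝ (⊤ : ℕ∞) (fun p : ℝ × ℝ => pdv (fun a b => Real.log (Ω2 a b)) p.1 p.2) U :=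
  contDiffOn_pdv (f := fun a b => Real.log (Ω2 a b)) W.isOpen W.logΩ2_smooth
    (WithTop.coe_le_coe.mpr le_top)

theorem contDiffOn_pdv_r (W : WaveSystem Λ U r Ω2 T) :
    ContDiffOn ℝ (⊤ : ℕ∞) (fun p : ℝ × ℝ => pdv r p.1 p.2) U :=
  contDiffOn_pdv W.isOpen W.r_smooth (WithTop.coe_le_coe.mpr le_top)

theorem contDiffOn_geodesicCoeff (W : WaveSystem Λ U r Ω2 T) :
    ContDiffOn ℝ (⊤ : ℕ∞) (fun p : ℝ × ℝ => geodesicCoeff r Ω2 p.1 p.2) U :=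
  W.contDiffOn_pdv_logΩ2.sub ((W.contDiffOn_pdv_r.const_smul (2 : ℝ)).div W.r_smooth
    fun p hp => (W.r_pos p hp).ne')

theorem hasDerivAt_geodesicCoeff (W : WaveSystem Λ U r Ω2 T) (hp : (u, v) ∈ U) :
    HasDerivAt (fun x => geodesicCoeff r Ω2 x v) (massSource Λ r Ω2 T u v) u := by
  have hdiff : ∀ {f : ℝ → ℝ → ℝ}, ContDiffOn ℝ (⊤ : ℕ∞) (fun p : ℝ × ℝ => f p.1 p.2) U →
      DifferentiableAt ℝ (fun p : ℝ × ℝ => f p.1 p.2) (u, v) := fun hf =>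
    (hf.contDiffAt (W.isOpen.mem_nhds hp)).differentiableAt (by simp)
  have hlog := hasDerivAt_pdu (hdiff W.contDiffOn_pdv_logΩ2)
  have hr' := hasDerivAt_pdu (hdiff W.contDiffOn_pdv_r)
  have hr := hasDerivAt_pdu (hdiff W.r_smooth)
  have hr0 : r u v ≠ 0 := (W.r_pos _ hp).ne'
  have hΩ0 : Ω2 u v ≠ 0 := (W.Ω2_pos _ hp).ne'
  refine (hlog.sub ((hr'.const_mul 2).div hr hr0)).congr_deriv ?_
  rw [W.wave_Ω (u, v) hp]
  have hrr := W.r_mul_pdu_pdv_r hp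
  unfold massSource hawkRen hawk
  field_simp
  linear_combination (-8) * hrr

-- `T` is not assumed continuous: `massSource` is the `u`-derivative of a smooth function.
theorem continuousOn_massSource (W : WaveSystem Λ U r Ω2 T) :
    ContinuousOn (fun p : ℝ × ℝ => massSource Λ r Ω2 T p.1 p.2) U :=
  (contDiffOn_pdu (m := 0) W.isOpen W.contDiffOn_geodesicCoeff
    (WithTop.coe_le_coe.mpr le_top)).continuousOn.congr
    fun _ hp => (W.hasDerivAt_geodesicCoeff hp).deriv.symm

end WaveSystem

namespace NullGeodesic

variable {U : Set (ℝ × ℝ)} {r Ω2 : ℝ → ℝ → ℝ} {S : Set ℝ} {gu gv du dv : ℝ → ℝ} {l : ℝ}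

theorem swap (hγ : NullGeodesic U r Ω2 S gu gv du dv l) :
    NullGeodesic (Prod.swap ⁻¹' U) (fun c d => r d c) (fun c d => Ω2 d c) S gv gu dv du l where
  l_pos := hγ.l_pos
  mem := hγ.mem
  du_pos := hγ.dv_pos
  dv_pos := hγ.du_pos
  du_cont := hγ.dv_cont
  dv_cont := hγ.du_cont
  deriv_u := hγ.deriv_v
  deriv_v := hγ.deriv_u
  shell t ht := by simpa only [mul_right_comm] using hγ.shell t ht
  geo_u := hγ.geo_v
  geo_v := hγ.geo_u

theorem hasDerivWithinAt_log_momentum (hγ : NullGeodesic U r Ω2 S gu gv du dv l)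
    (hΩ2 : ∀ p ∈ U, 0 < Ω2 p.1 p.2) {t : ℝ} (ht : t ∈ S) :
    HasDerivWithinAt (fun t => Real.log (Ω2 (gu t) (gv t) * du t))
      (geodesicCoeff r Ω2 (gu t) (gv t) * dv t) S t := by
  have hΩ2du : Ω2 (gu t) (gv t) * du t ≠ 0 := (mul_pos (hΩ2 _ (hγ.mem t ht)) (hγ.du_pos t ht)).ne'
  refine ((hγ.geo_u t ht).log hΩ2du).congr_deriv ?_
  rw [← hγ.shell t ht, mul_div_assoc, mul_div_cancel_left₀ _ hΩ2du]
  rfl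

end NullGeodesic

theorem WaveSystem.log_momentum_sub_eq {Λ : ℝ} {U : Set (ℝ × ℝ)} {r Ω2 T : ℝ → ℝ → ℝ}
    (W : WaveSystem Λ U r Ω2 T) {S : Set ℝ} {gu gv du dv : ℝ → ℝ} {l : ℝ}
    (hγ : NullGeodesic U r Ω2 S gu gv du dv l) {t₀ t₁ : ℝ} (ht : t₀ ≤ t₁)
    (hS : Icc t₀ t₁ ⊆ S) {u₁ σ : ℝ → ℝ} (hu₁ : ContinuousOn u₁ (Icc (gv t₀) (gv t₁)))
    (hγu₁ : ∀ t ∈ Icc t₀ t₁, u₁ (gv t) ≤ gu t)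
    (hσ : ∀ w ∈ Icc (gv t₀) (gv t₁), σ w ∈ Icc t₀ t₁ ∧ gv (σ w) = w)
    (hregion : ∀ w ∈ Icc (gv t₀) (gv t₁), ∀ x ∈ Icc (u₁ w) (gu (σ w)), (x, w) ∈ U) :
    Real.log (Ω2 (gu t₁) (gv t₁) * du t₁) - Real.log (Ω2 (gu t₀) (gv t₀) * du t₀) =
      (∫ w in gv t₀..gv t₁, ∫ x in u₁ w..gu (σ w), massSource Λ r Ω2 T x w) +
        ∫ w in gv t₀..gv t₁, geodesicCoeff r Ω2 (u₁ w) w := by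
  have hS_nhds : ∀ t ∈ Ioo t₀ t₁, S ∈ 𝓝 t := fun t ht =>
    mem_of_superset (Icc_mem_nhds ht.1 ht.2) hS
  have hlog := fun t (ht : t ∈ Icc t₀ t₁) => hγ.hasDerivWithinAt_log_momentum W.Ω2_pos (hS ht)
  refine sub_eq_integral_integral_add_integral W.contDiffOn_geodesicCoeff.continuousOn
    W.continuousOn_massSource (fun _ hp => W.hasDerivAt_geodesicCoeff hp) ht
    (fun t ht => (hlog t ht).continuousWithinAt.mono hS)
    (fun t ht => (hlog t (Ioo_subset_Icc_self ht)).hasDerivAt (hS_nhds t ht))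
    (fun t ht => hγ.mem t (hS ht))
    (fun t ht => (hγ.deriv_u t (hS ht)).continuousWithinAt.mono hS)
    (fun t ht => (hγ.deriv_v t (hS ht)).continuousWithinAt.mono hS)
    (fun t ht => (hγ.deriv_v t (hS (Ioo_subset_Icc_self ht))).hasDerivAt (hS_nhds t ht))
    (fun t ht => hγ.dv_pos t (hS (Ioo_subset_Icc_self ht))) (hγ.dv_cont.mono hS)
    (fun w hw => (hσ w hw).1) (fun w hw => (hσ w hw).2) hu₁ (fun w hw => ?_) hregion
  simpa only [(hσ w hw).2] using hγu₁ _ (hσ w hw).1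

theorem Icc_subset_IcoE {a : EReal} {s : ℝ} (hs : s ∈ IcoE a) : Icc 0 s ⊆ IcoE a :=
  fun _ ht => ⟨ht.1, (EReal.coe_le_coe_iff.2 ht.2).trans_lt hs.2⟩

/-- **Integral identities for the change of `log(Ω²γ̇ᵘ)` and `log(Ω²γ̇ᵛ)` along null
geodesics** (identities (5.6)–(5.7) of Moschidis, *A proof of the instability of AdS for
the Einstein–massless Vlasov system*). -/
theorem geodesic_log_momentum_integral_identity :
    (∀ (Λ : ℝ), Λ < 0 → ∀ Udom : Set (ℝ × ℝ), IsOpen Udom →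
      ∀ (r Ω2 : ℝ → ℝ → ℝ) (fbar : ℝ → ℝ → ℝ → ℝ → ℝ → ℝ),
        EinsteinVlasov Λ Udom r Ω2 fbar →
        ∀ u₁ : ℝ → ℝ, ContDiff ℝ 1 u₁ →
        ∀ (a : EReal) (gu gv du dv : ℝ → ℝ) (l : ℝ),
          NullGeodesic Udom r Ω2 (IcoE a) gu gv du dv l →
          (∀ t ∈ IcoE a, u₁ (gv t) ≤ gu t) →
          gu 0 = u₁ (gv 0) →
          ∀ s ∈ IcoE a, ∀ σ : ℝ → ℝ,
            (∀ w ∈ Icc (gv 0) (gv s), σ w ∈ Icc (0 : ℝ) s ∧ gv (σ w) = w) →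
            (∀ w ∈ Icc (gv 0) (gv s), ∀ x ∈ Icc (u₁ w) (gu (σ w)), (x, w) ∈ Udom) →
            Real.log (Ω2 (gu s) (gv s) * du s) -
                Real.log (Ω2 (gu 0) (gv 0) * du 0) =
              (∫ w in (gv 0)..(gv s),
                ∫ x in (u₁ w)..(gu (σ w)),
                  (1 / 2 * ((6 * hawkRen Λ r Ω2 x w / r x w - 1) / (r x w) ^ 2) *
                      Ω2 x w -
                    24 * π * Tuv r Ω2 fbar x w)) +
                ∫ w in (gv 0)..(gv s),
                  (pdv (fun c d => Real.log (Ω2 c d)) (u₁ w) w -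
                    2 * pdv r (u₁ w) w / r (u₁ w) w)) ∧
    (∀ (Λ : ℝ), Λ < 0 → ∀ Udom : Set (ℝ × ℝ), IsOpen Udom →
      ∀ (r Ω2 : ℝ → ℝ → ℝ) (fbar : ℝ → ℝ → ℝ → ℝ → ℝ → ℝ),
        EinsteinVlasov Λ Udom r Ω2 fbar →
        ∀ v₁ : ℝ → ℝ, ContDiff ℝ 1 v₁ →
        ∀ (a : EReal) (gu gv du dv : ℝ → ℝ) (l : ℝ),
          NullGeodesic Udom r Ω2 (IcoE a) gu gv du dv l →
          (∀ t ∈ IcoE a, v₁ (gu t) ≤ gv t) →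
          gv 0 = v₁ (gu 0) →
          ∀ s ∈ IcoE a, ∀ σ : ℝ → ℝ,
            (∀ x ∈ Icc (gu 0) (gu s), σ x ∈ Icc (0 : ℝ) s ∧ gu (σ x) = x) →
            (∀ x ∈ Icc (gu 0) (gu s), ∀ w ∈ Icc (v₁ x) (gv (σ x)), (x, w) ∈ Udom) →
            Real.log (Ω2 (gu s) (gv s) * dv s) -
                Real.log (Ω2 (gu 0) (gv 0) * dv 0) =
              (∫ x in (gu 0)..(gu s),
                ∫ w in (v₁ x)..(gv (σ x)),
                  (1 / 2 * ((6 * hawkRen Λ r Ω2 x w / r x w - 1) / (r x w) ^ 2) *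
                      Ω2 x w -
                    24 * π * Tuv r Ω2 fbar x w)) +
                ∫ x in (gu 0)..(gu s),
                  (pdu (fun c d => Real.log (Ω2 c d)) x (v₁ x) -
                    2 * pdu r x (v₁ x) / r x (v₁ x))) := by
  constructor
  · intro Λ _ U hU r Ω2 fbar hEV u₁ hu₁ a gu gv du dv l hγ hγu₁ _ s hs σ hσ hregion
    exact (hEV.toWaveSystem hU).log_momentum_sub_eq hγ hs.1 (Icc_subset_IcoE hs)
      hu₁.continuous.continuousOn (fun t ht => hγu₁ t (Icc_subset_IcoE hs ht)) hσ hregion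
  · intro Λ _ U hU r Ω2 fbar hEV v₁ hv₁ a gu gv du dv l hγ hγv₁ _ s hs σ hσ hregion
    have h := (hEV.toWaveSystem hU).swap.log_momentum_sub_eq hγ.swap hs.1 (Icc_subset_IcoE hs)
      hv₁.continuous.continuousOn (fun t ht => hγv₁ t (Icc_subset_IcoE hs ht)) hσ hregion
    simp only [massSource_swap] at h
    exact h
end
end

section
/- Let 𝒰 ⊆ ℝ² be open, let r, Ω² : 𝒰 → (0,∞) be smooth, and let f̄ be a smooth nonnegative function on 𝒰 × (0,∞)³, compactly supported in momentum locally uniformly. Fix (u,v) ∈ 𝒰 with ∂_u r(u,v) < 0 < ∂_v r(u,v) and 2m/r(u,v) < 1, and set S := sup{ ∂_v r(u,v)·p^v − ∂_u r(u,v)·p^u : (p^u,p^v,l) belongs to the support of f̄(u,v;·,·,·) and Ω²p^u p^v = l²/r² }. Then at (u,v): ((1 − 2m/r)/∂_v r)·T_vv + ((1 − 2m/r)/(−∂_u r))·T_uv ≤ 2·S·N_v and ((1 − 2m/r)/∂_v r)·T_uv + ((1 − 2m/r)/(−∂_u r))·T_uu ≤ 2·S·N_u. -/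
open Real MeasureTheory Filter Set Topology

noncomputable section

/-- The particle-current component
`N_v = π r⁻² ∫∫ Ω²pᵘ f̄|_{pᵛ = l²/(Ω²r²pᵘ)} (dpᵘ/pᵘ) l dl`. -/
def Nv (r Ω2 : ℝ → ℝ → ℝ) (fbar : ℝ → ℝ → ℝ → ℝ → ℝ → ℝ) (u v : ℝ) : ℝ :=
  π * ((r u v) ^ 2)⁻¹ *
    ∫ p in Ioi (0 : ℝ), p⁻¹ *
      (∫ l in Ioi (0 : ℝ),
        Ω2 u v * p * fbar u v p (l ^ 2 / (Ω2 u v * (r u v) ^ 2 * p)) l * l)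

/-- The particle-current component
`N_u = π r⁻² ∫∫ Ω²pᵛ f̄|_{pᵛ = l²/(Ω²r²pᵘ)} (dpᵘ/pᵘ) l dl`. -/
def Nu (r Ω2 : ℝ → ℝ → ℝ) (fbar : ℝ → ℝ → ℝ → ℝ → ℝ → ℝ) (u v : ℝ) : ℝ :=
  π * ((r u v) ^ 2)⁻¹ *
    ∫ p in Ioi (0 : ℝ), p⁻¹ *
      (∫ l in Ioi (0 : ℝ),
        Ω2 u v * (l ^ 2 / (Ω2 u v * (r u v) ^ 2 * p)) *
          fbar u v p (l ^ 2 / (Ω2 u v * (r u v) ^ 2 * p)) l * l)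


/-!
Since `1 − 2m/r = −4Ω⁻²∂ᵤr∂ᵥr`, the two weights turn `Ω²pᵘ` and `Ω²pᵛ` into
`4(∂ᵥr·pᵛ − ∂ᵤr·pᵘ)`, which is at most `4S` wherever `f̄ ≠ 0` on the mass shell. Multiplying
this pointwise bound by `Ω²pᵘ f̄` (resp. `Ω²pᵛ f̄`) and integrating gives the two inequalities;
the compact momentum support of `f̄` makes every integrand integrable, so the integrals are
linear and monotone.
-/

/-- `∫₀^∞∫₀^∞ F(pᵘ, l) (dpᵘ/pᵘ) l dl`; each of `T_vv, T_uv, T_uu, N_v, N_u` is a multiple of it. -/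
def shellIntegral (F : ℝ → ℝ → ℝ) : ℝ :=
  ∫ p in Ioi (0 : ℝ), p⁻¹ * ∫ l in Ioi (0 : ℝ), F p l * l

def shellIntegrand (F : ℝ → ℝ → ℝ) (q : ℝ × ℝ) : ℝ :=
  q.1⁻¹ * (F q.1 q.2 * q.2)

lemma shellIntegral_eq_setIntegral {F : ℝ → ℝ → ℝ}
    (hF : IntegrableOn (shellIntegrand F) (Ioi 0 ×ˢ Ioi 0)) :
    shellIntegral F = ∫ q in Ioi (0 : ℝ) ×ˢ Ioi (0 : ℝ), shellIntegrand F q := by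
  rw [Measure.volume_eq_prod] at hF ⊢
  rw [setIntegral_prod _ hF]
  simp only [shellIntegral, shellIntegrand, integral_const_mul]

lemma integrableOn_shellIntegrand {F : ℝ → ℝ → ℝ} {K : Set (ℝ × ℝ)} (hK : IsCompact K)
    (hKpos : K ⊆ Ioi 0 ×ˢ Ioi 0) (hF : ContinuousOn (fun q : ℝ × ℝ => F q.1 q.2) K)
    (hF0 : ∀ q ∉ K, F q.1 q.2 = 0) :
    IntegrableOn (shellIntegrand F) (Ioi 0 ×ˢ Ioi 0) := by
  have hcont : ContinuousOn (shellIntegrand F) K :=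
    (continuous_fst.continuousOn.inv₀ fun q hq => (hKpos hq).1.ne').mul
      (hF.mul continuous_snd.continuousOn)
  refine (hcont.integrableOn_compact hK).of_forall_sdiff_eq_zero
    (measurableSet_Ioi.prod measurableSet_Ioi) fun q hq => ?_
  simp only [shellIntegrand, hF0 q hq.2, zero_mul, mul_zero]

lemma shellIntegral_add_le {α β γ : ℝ} {F₁ F₂ F₃ : ℝ → ℝ → ℝ}
    (h₁ : IntegrableOn (shellIntegrand F₁) (Ioi 0 ×ˢ Ioi 0))
    (h₂ : IntegrableOn (shellIntegrand F₂) (Ioi 0 ×ˢ Ioi 0))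
    (h₃ : IntegrableOn (shellIntegrand F₃) (Ioi 0 ×ˢ Ioi 0))
    (hle : ∀ p > 0, ∀ l > 0, α * F₁ p l + β * F₂ p l ≤ γ * F₃ p l) :
    α * shellIntegral F₁ + β * shellIntegral F₂ ≤ γ * shellIntegral F₃ := by
  rw [shellIntegral_eq_setIntegral h₁, shellIntegral_eq_setIntegral h₂,
    shellIntegral_eq_setIntegral h₃, ← integral_const_mul, ← integral_const_mul,
    ← integral_const_mul, ← integral_add (h₁.const_mul α) (h₂.const_mul β)]
  refine setIntegral_mono_on ((h₁.const_mul α).add (h₂.const_mul β)) (h₃.const_mul γ)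
    (measurableSet_Ioi.prod measurableSet_Ioi) fun q ⟨hp, hl⟩ => ?_
  have hpl : 0 ≤ q.1⁻¹ * q.2 := mul_nonneg (inv_nonneg.2 (le_of_lt hp)) (le_of_lt hl)
  calc α * shellIntegrand F₁ q + β * shellIntegrand F₂ q
      = q.1⁻¹ * q.2 * (α * F₁ q.1 q.2 + β * F₂ q.1 q.2) := by
        simp only [shellIntegrand]; ring
    _ ≤ q.1⁻¹ * q.2 * (γ * F₃ q.1 q.2) := mul_le_mul_of_nonneg_left (hle _ hp _ hl) hpl
    _ = γ * shellIntegrand F₃ q := by simp only [shellIntegrand]; ring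

lemma shellIntegral_mul_add_le {g : ℝ × ℝ → ℝ} {K : Set (ℝ × ℝ)} (hK : IsCompact K)
    (hKpos : K ⊆ Ioi 0 ×ˢ Ioi 0) (hg : ContinuousOn g (Ioi 0 ×ˢ Ioi 0))
    (hg0 : ∀ q ∉ K, g q = 0) (hgnn : ∀ q, 0 ≤ g q) {α β γ : ℝ} {w₁ w₂ w₃ : ℝ × ℝ → ℝ}
    (h₁ : ContinuousOn w₁ (Ioi 0 ×ˢ Ioi 0)) (h₂ : ContinuousOn w₂ (Ioi 0 ×ˢ Ioi 0))
    (h₃ : ContinuousOn w₃ (Ioi 0 ×ˢ Ioi 0))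
    (hle : ∀ p > 0, ∀ l > 0, g (p, l) ≠ 0 → α * w₁ (p, l) + β * w₂ (p, l) ≤ γ * w₃ (p, l)) :
    α * shellIntegral (fun p l => w₁ (p, l) * g (p, l)) +
        β * shellIntegral (fun p l => w₂ (p, l) * g (p, l)) ≤
      γ * shellIntegral (fun p l => w₃ (p, l) * g (p, l)) := by
  have hint : ∀ w : ℝ × ℝ → ℝ, ContinuousOn w (Ioi 0 ×ˢ Ioi 0) →
      IntegrableOn (shellIntegrand fun p l => w (p, l) * g (p, l)) (Ioi 0 ×ˢ Ioi 0) :=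
    fun w hw => integrableOn_shellIntegrand hK hKpos ((hw.fun_mul hg).mono hKpos)
      fun q hq => mul_eq_zero_of_right _ (hg0 q hq)
  refine shellIntegral_add_le (hint w₁ h₁) (hint w₂ h₂) (hint w₃ h₃) fun p hp l hl => ?_
  rcases eq_or_ne (g (p, l)) 0 with h | h
  · simp only [h, mul_zero, add_zero, le_refl]
  · linear_combination mul_le_mul_of_nonneg_right (hle p hp l hl h) (hgnn (p, l))

lemma shellIntegral_quadratic_le {g : ℝ × ℝ → ℝ} {K : Set (ℝ × ℝ)} (hK : IsCompact K)
    (hKpos : K ⊆ Ioi 0 ×ˢ Ioi 0) (hg : ContinuousOn g (Ioi 0 ×ˢ Ioi 0))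
    (hg0 : ∀ q ∉ K, g q = 0) (hgnn : ∀ q, 0 ≤ g q) {α β γ : ℝ} {P Q : ℝ × ℝ → ℝ}
    (hP : ContinuousOn P (Ioi 0 ×ˢ Ioi 0)) (hQ : ContinuousOn Q (Ioi 0 ×ˢ Ioi 0))
    (hP0 : ∀ p > 0, ∀ l > 0, 0 ≤ P (p, l)) (hQ0 : ∀ p > 0, ∀ l > 0, 0 ≤ Q (p, l))
    (hle : ∀ p > 0, ∀ l > 0, g (p, l) ≠ 0 → α * P (p, l) + β * Q (p, l) ≤ γ) :
    α * shellIntegral (fun p l => P (p, l) ^ 2 * g (p, l)) +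
          β * shellIntegral (fun p l => P (p, l) * Q (p, l) * g (p, l)) ≤
        γ * shellIntegral (fun p l => P (p, l) * g (p, l)) ∧
      α * shellIntegral (fun p l => P (p, l) * Q (p, l) * g (p, l)) +
          β * shellIntegral (fun p l => Q (p, l) ^ 2 * g (p, l)) ≤
        γ * shellIntegral (fun p l => Q (p, l) * g (p, l)) :=
  ⟨shellIntegral_mul_add_le hK hKpos hg hg0 hgnn (hP.fun_pow 2) (hP.fun_mul hQ) hP
      fun p hp l hl h =>
        by linear_combination mul_le_mul_of_nonneg_left (hle p hp l hl h) (hP0 p hp l hl),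
    shellIntegral_mul_add_le hK hKpos hg hg0 hgnn (hP.fun_mul hQ) (hQ.fun_pow 2) hQ
      fun p hp l hl h =>
        by linear_combination mul_le_mul_of_nonneg_left (hle p hp l hl h) (hQ0 p hp l hl)⟩

lemma continuousOn_sq_div_const_mul {c : ℝ} (hc : c ≠ 0) :
    ContinuousOn (fun q : ℝ × ℝ => q.2 ^ 2 / (c * q.1)) (Ioi 0 ×ˢ Ioi 0) :=
  (continuous_snd.pow 2).continuousOn.div (continuous_const.mul continuous_fst).continuousOn
    fun _ hq => mul_ne_zero hc (ne_of_gt hq.1)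

lemma continuousOn_fbar_massShell {Udom : Set (ℝ × ℝ)} {fbar : ℝ → ℝ → ℝ → ℝ → ℝ → ℝ}
    (hf : ContinuousOn
      (fun q : (ℝ × ℝ) × ℝ × ℝ × ℝ => fbar q.1.1 q.1.2 q.2.1 q.2.2.1 q.2.2.2)
      (Udom ×ˢ (Ioi (0 : ℝ) ×ˢ (Ioi (0 : ℝ) ×ˢ Ioi (0 : ℝ)))))
    {u v c : ℝ} (hmem : (u, v) ∈ Udom) (hc : 0 < c) :
    ContinuousOn (fun q : ℝ × ℝ => fbar u v q.1 (q.2 ^ 2 / (c * q.1)) q.2) (Ioi 0 ×ˢ Ioi 0) := by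
  refine hf.comp (f := fun q : ℝ × ℝ => ((u, v), q.1, q.2 ^ 2 / (c * q.1), q.2))
    (continuousOn_const.prodMk (continuous_fst.continuousOn.prodMk
      ((continuousOn_sq_div_const_mul hc.ne').prodMk continuous_snd.continuousOn)))
    fun q ⟨hp, hl⟩ => ⟨hmem, hp, ?_, hl⟩
  exact div_pos (pow_pos hl 2) (mul_pos hc hp)

lemma exists_isCompact_forall_notMem_eq_zero {F : ℝ → ℝ → ℝ → ℝ} {C : Set (ℝ × ℝ × ℝ)}
    (hC : IsCompact C) (hCpos : C ⊆ Ioi 0 ×ˢ (Ioi 0 ×ˢ Ioi 0))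
    (hC0 : ∀ q ∉ C, F q.1 q.2.1 q.2.2 = 0) (φ : ℝ × ℝ → ℝ) :
    ∃ K : Set (ℝ × ℝ), IsCompact K ∧ K ⊆ Ioi 0 ×ˢ Ioi 0 ∧ ∀ q ∉ K, F q.1 (φ q) q.2 = 0 := by
  refine ⟨(fun q : ℝ × ℝ × ℝ => (q.1, q.2.2)) '' C, hC.image (by fun_prop), ?_,
    fun q hq => hC0 (q.1, φ q, q.2) fun h => hq ⟨_, h, rfl⟩⟩
  rintro _ ⟨q, hq, rfl⟩
  exact ⟨(hCpos hq).1, (hCpos hq).2.2⟩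

lemma le_sSup_massShell_of_ne_zero {F : ℝ → ℝ → ℝ → ℝ} {C : Set (ℝ × ℝ × ℝ)}
    (hC : IsCompact C) (hC0 : ∀ q ∉ C, F q.1 q.2.1 q.2.2 = 0) {W R A B pu pv lm : ℝ}
    (hshell : W * pu * pv = lm ^ 2 / R ^ 2) (hF : F pu pv lm ≠ 0) :
    B * pv - A * pu ≤ sSup {x : ℝ | ∃ pu pv lm : ℝ,
      (pu, pv, lm) ∈ closure {q : ℝ × ℝ × ℝ | F q.1 q.2.1 q.2.2 ≠ 0} ∧
      W * pu * pv = lm ^ 2 / R ^ 2 ∧ x = B * pv - A * pu} := by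
  have hsupp : closure {q : ℝ × ℝ × ℝ | F q.1 q.2.1 q.2.2 ≠ 0} ⊆ C :=
    closure_minimal (fun q hq => by_contra fun h => hq (hC0 q h)) hC.isClosed
  refine le_csSup (((hC.image (f := fun q : ℝ × ℝ × ℝ => B * q.2.1 - A * q.1)
    (by fun_prop)).bddAbove).mono ?_) ⟨pu, pv, lm, subset_closure hF, hshell, rfl⟩
  rintro _ ⟨pu, pv, lm, hq, -, rfl⟩
  exact ⟨_, hsupp hq, rfl⟩

lemma one_sub_two_hawk_div_mul_add {r Ω2 : ℝ → ℝ → ℝ} {u v : ℝ} (hr : r u v ≠ 0)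
    (hΩ : Ω2 u v ≠ 0) (hu : pdu r u v ≠ 0) (hv : pdv r u v ≠ 0) (pu pv : ℝ) :
    (1 - 2 * hawk r Ω2 u v / r u v) / pdv r u v * (Ω2 u v * pu) +
        (1 - 2 * hawk r Ω2 u v / r u v) / (-pdu r u v) * (Ω2 u v * pv) =
      4 * (pdv r u v * pv - pdu r u v * pu) := by
  unfold hawk
  field_simp
  ring

theorem energy_momentum_particle_current_bound_general
    (Udom : Set (ℝ × ℝ))
    (r Ω2 : ℝ → ℝ → ℝ) (fbar : ℝ → ℝ → ℝ → ℝ → ℝ → ℝ)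
    (hrpos : ∀ p ∈ Udom, 0 < r p.1 p.2) (hΩpos : ∀ p ∈ Udom, 0 < Ω2 p.1 p.2)
    (hfnn : ∀ u v pu pv lm, 0 ≤ fbar u v pu pv lm)
    (hfs : ContDiffOn ℝ (⊤ : ℕ∞)
      (fun q : (ℝ × ℝ) × ℝ × ℝ × ℝ => fbar q.1.1 q.1.2 q.2.1 q.2.2.1 q.2.2.2)
      (Udom ×ˢ (Ioi (0 : ℝ) ×ˢ (Ioi (0 : ℝ) ×ˢ Ioi (0 : ℝ)))))
    (hfc : ∀ K : Set (ℝ × ℝ), IsCompact K → K ⊆ Udom →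
      ∃ C : Set (ℝ × ℝ × ℝ), IsCompact C ∧
        C ⊆ Ioi (0 : ℝ) ×ˢ (Ioi (0 : ℝ) ×ˢ Ioi (0 : ℝ)) ∧
        ∀ p ∈ K, ∀ q : ℝ × ℝ × ℝ, q ∉ C → fbar p.1 p.2 q.1 q.2.1 q.2.2 = 0)
    (u v : ℝ) (hmem : (u, v) ∈ Udom)
    (hdur : pdu r u v < 0) (hdvr : 0 < pdv r u v)
    (S : ℝ)
    (hS : S = sSup {x : ℝ | ∃ pu pv lm : ℝ,
      (pu, pv, lm) ∈ closure {q : ℝ × ℝ × ℝ | fbar u v q.1 q.2.1 q.2.2 ≠ 0} ∧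
      Ω2 u v * pu * pv = lm ^ 2 / (r u v) ^ 2 ∧
      x = pdv r u v * pv - pdu r u v * pu}) :
    ((1 - 2 * hawk r Ω2 u v / r u v) / pdv r u v) * Tvv r Ω2 fbar u v +
        ((1 - 2 * hawk r Ω2 u v / r u v) / (-pdu r u v)) * Tuv r Ω2 fbar u v ≤
      2 * S * Nv r Ω2 fbar u v ∧
      ((1 - 2 * hawk r Ω2 u v / r u v) / pdv r u v) * Tuv r Ω2 fbar u v +
          ((1 - 2 * hawk r Ω2 u v / r u v) / (-pdu r u v)) * Tuu r Ω2 fbar u v ≤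
        2 * S * Nu r Ω2 fbar u v := by
  set κ := 1 - 2 * hawk r Ω2 u v / r u v
  obtain ⟨C, hC, hCpos, hC0⟩ := hfc {(u, v)} isCompact_singleton (singleton_subset_iff.2 hmem)
  replace hC0 : ∀ q ∉ C, fbar u v q.1 q.2.1 q.2.2 = 0 := hC0 (u, v) rfl
  have hW : 0 < Ω2 u v := hΩpos (u, v) hmem
  have hR : 0 < r u v := hrpos (u, v) hmem
  have hc : 0 < Ω2 u v * r u v ^ 2 := by positivity
  obtain ⟨K, hK, hKpos, hK0⟩ := exists_isCompact_forall_notMem_eq_zero hC hCpos hC0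
    fun q => q.2 ^ 2 / (Ω2 u v * r u v ^ 2 * q.1)
  have hbound : ∀ p > 0, ∀ l > 0, fbar u v p (l ^ 2 / (Ω2 u v * r u v ^ 2 * p)) l ≠ 0 →
      κ / pdv r u v * (Ω2 u v * p) +
        κ / (-pdu r u v) * (Ω2 u v * (l ^ 2 / (Ω2 u v * r u v ^ 2 * p))) ≤ 4 * S := by
    intro p hp l _ h
    rw [one_sub_two_hawk_div_mul_add hR.ne' hW.ne' hdur.ne hdvr.ne']
    have := hS ▸ le_sSup_massShell_of_ne_zero hC hC0 (by field_simp) h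
    linarith
  obtain ⟨hv, hu⟩ := shellIntegral_quadratic_le hK hKpos
    (continuousOn_fbar_massShell hfs.continuousOn hmem hc) hK0 (fun _ => hfnn _ _ _ _ _)
    (P := fun q => Ω2 u v * q.1) (Q := fun q => Ω2 u v * (q.2 ^ 2 / (Ω2 u v * r u v ^ 2 * q.1)))
    (by fun_prop) (continuousOn_const.mul (continuousOn_sq_div_const_mul hc.ne'))
    (fun p hp l _ => by dsimp only; positivity) (fun p hp l _ => by dsimp only; positivity) hbound
  simp only [shellIntegral] at hv hu
  simp only [Tvv, Tuv, Tuu, Nv, Nu]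
  constructor
  · linear_combination (π / 2 * ((r u v) ^ 2)⁻¹) * hv
  · linear_combination (π / 2 * ((r u v) ^ 2)⁻¹) * hu

/-- **Bound of the energy-momentum components by the particle current** (inequalities
(2.33)–(2.34) of Moschidis, *A proof of the instability of AdS for the Einstein–massless
Vlasov system*): with `S` the supremum of `∂_v r·pᵛ − ∂_u r·pᵘ` over the part of the mass
shell lying in the momentum support of `f̄(u,v;·,·,·)`, one has
`((1−2m/r)/∂_v r)T_vv + ((1−2m/r)/(−∂_u r))T_uv ≤ 2·S·N_v` and
`((1−2m/r)/∂_v r)T_uv + ((1−2m/r)/(−∂_u r))T_uu ≤ 2·S·N_u`. -/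
theorem energy_momentum_particle_current_bound
    (Udom : Set (ℝ × ℝ)) (hopen : IsOpen Udom)
    (r Ω2 : ℝ → ℝ → ℝ) (fbar : ℝ → ℝ → ℝ → ℝ → ℝ → ℝ)
    (hrpos : ∀ p ∈ Udom, 0 < r p.1 p.2) (hΩpos : ∀ p ∈ Udom, 0 < Ω2 p.1 p.2)
    (hrs : ContDiffOn ℝ (⊤ : ℕ∞) (fun p : ℝ × ℝ => r p.1 p.2) Udom)
    (hΩs : ContDiffOn ℝ (⊤ : ℕ∞) (fun p : ℝ × ℝ => Ω2 p.1 p.2) Udom)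
    (hfnn : ∀ u v pu pv lm, 0 ≤ fbar u v pu pv lm)
    (hfs : ContDiffOn ℝ (⊤ : ℕ∞)
      (fun q : (ℝ × ℝ) × ℝ × ℝ × ℝ => fbar q.1.1 q.1.2 q.2.1 q.2.2.1 q.2.2.2)
      (Udom ×ˢ (Ioi (0 : ℝ) ×ˢ (Ioi (0 : ℝ) ×ˢ Ioi (0 : ℝ)))))
    (hfc : ∀ K : Set (ℝ × ℝ), IsCompact K → K ⊆ Udom →
      ∃ C : Set (ℝ × ℝ × ℝ), IsCompact C ∧
        C ⊆ Ioi (0 : ℝ) ×ˢ (Ioi (0 : ℝ) ×ˢ Ioi (0 : ℝ)) ∧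
        ∀ p ∈ K, ∀ q : ℝ × ℝ × ℝ, q ∉ C → fbar p.1 p.2 q.1 q.2.1 q.2.2 = 0)
    (u v : ℝ) (hmem : (u, v) ∈ Udom)
    (hdur : pdu r u v < 0) (hdvr : 0 < pdv r u v)
    (htrap : 2 * hawk r Ω2 u v / r u v < 1)
    (S : ℝ)
    (hS : S = sSup {x : ℝ | ∃ pu pv lm : ℝ,
      (pu, pv, lm) ∈ closure {q : ℝ × ℝ × ℝ | fbar u v q.1 q.2.1 q.2.2 ≠ 0} ∧
      Ω2 u v * pu * pv = lm ^ 2 / (r u v) ^ 2 ∧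
      x = pdv r u v * pv - pdu r u v * pu}) :
    ((1 - 2 * hawk r Ω2 u v / r u v) / pdv r u v) * Tvv r Ω2 fbar u v +
        ((1 - 2 * hawk r Ω2 u v / r u v) / (-pdu r u v)) * Tuv r Ω2 fbar u v ≤
      2 * S * Nv r Ω2 fbar u v ∧
      ((1 - 2 * hawk r Ω2 u v / r u v) / pdv r u v) * Tuv r Ω2 fbar u v +
          ((1 - 2 * hawk r Ω2 u v / r u v) / (-pdu r u v)) * Tuu r Ω2 fbar u v ≤
        2 * S * Nu r Ω2 fbar u v :=
  energy_momentum_particle_current_bound_general Udom r Ω2 fbar hrpos hΩpos hfnn hfs hfc u v hmem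
    hdur hdvr S hS
end
end

section
/- Let 𝒰 ⊆ ℝ² be open, let r, Ω² : 𝒰 → (0,∞) be smooth with ∂_u r < 0 on 𝒰, and let γ : [s₀,s₁] → 𝒰 be a C¹ curve, γ(s) = (u(s),v(s)) with γ̇^u := du/ds > 0 and γ̇^v := dv/ds > 0, satisfying the mass-shell relation Ω²·γ̇^u·γ̇^v = l²/r² along γ for some l > 0. Assume that along γ: (i) Ω²γ̇^u ≥ e₀ for some e₀ > 0; (ii) Ω²/(−∂_u r) ≤ K for some K > 0; and (iii) ∂_v r·γ̇^v ≤ (1/2)(−∂_u r)·γ̇^u. Then r is strictly decreasing along γ, and v(γ(s₁)) − v(γ(s₀)) ≤ 2K·l² / ( e₀² · r(γ(s₁)) ). -/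
/-!
Write `R(s) = r(γ(s))`. By the chain rule and (iii), `R' ≤ ½ ∂_u r · γ̇ᵘ < 0`, so `R` decreases
strictly, and (ii) gives `Ω²γ̇ᵘ ≤ 2K(−R')`. The mass shell relation and (i) give
`γ̇ᵛ = l² / (R² · Ω²γ̇ᵘ) ≤ l² · Ω²γ̇ᵘ / (e₀² R²) ≤ C · (−R') / R² = C · (1/R)'` with
`C = 2Kl²/e₀²`. Hence `v − C/R` is antitone along `γ`, and
`v(s₁) − v(s₀) ≤ C/R(s₁) − C/R(s₀) ≤ C/R(s₁)`.
-/

open Real MeasureTheory Filter Set Topology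

noncomputable section

section ChainRule

variable {f : ℝ → ℝ → ℝ} {x y : ℝ}

lemma pdu_eq_fderiv_apply (hf : DifferentiableAt ℝ (fun q : ℝ × ℝ => f q.1 q.2) (x, y)) :
    pdu f x y = fderiv ℝ (fun q : ℝ × ℝ => f q.1 q.2) (x, y) (1, 0) :=
  (hf.hasFDerivAt.comp_hasDerivAt_of_eq x ((hasDerivAt_id x).prodMk (hasDerivAt_const x y))
    rfl).deriv

lemma pdv_eq_fderiv_apply (hf : DifferentiableAt ℝ (fun q : ℝ × ℝ => f q.1 q.2) (x, y)) :
    pdv f x y = fderiv ℝ (fun q : ℝ × ℝ => f q.1 q.2) (x, y) (0, 1) :=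
  (hf.hasFDerivAt.comp_hasDerivAt_of_eq y ((hasDerivAt_const y x).prodMk (hasDerivAt_id y))
    rfl).deriv

theorem DifferentiableAt.hasDerivWithinAt_comp_curve {gu gv : ℝ → ℝ} {a b s : ℝ} {S : Set ℝ}
    (hf : DifferentiableAt ℝ (fun q : ℝ × ℝ => f q.1 q.2) (gu s, gv s))
    (hu : HasDerivWithinAt gu a S s) (hv : HasDerivWithinAt gv b S s) :
    HasDerivWithinAt (fun t => f (gu t) (gv t))
      (pdu f (gu s) (gv s) * a + pdv f (gu s) (gv s) * b) S s := by
  have hab : ((a, b) : ℝ × ℝ) = a • ((1 : ℝ), (0 : ℝ)) + b • ((0 : ℝ), (1 : ℝ)) := by simp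
  have h := hf.hasFDerivAt.comp_hasDerivWithinAt s (hu.prodMk hv)
  rwa [Function.comp_def, hab, map_add, map_smul, map_smul, ← pdu_eq_fderiv_apply hf,
    ← pdv_eq_fderiv_apply hf, smul_eq_mul, smul_eq_mul, mul_comm a, mul_comm b] at h

end ChainRule

section Monotonicity

variable {D : Set ℝ} {f f' : ℝ → ℝ}

lemma strictAntiOn_of_hasDerivWithinAt_self_neg (hD : Convex ℝ D)
    (hf : ∀ x ∈ D, HasDerivWithinAt f (f' x) D x) (hf'₀ : ∀ x ∈ interior D, f' x < 0) :
    StrictAntiOn f D :=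
  strictAntiOn_of_hasDerivWithinAt_neg hD (fun x hx => (hf x hx).continuousWithinAt)
    (fun x hx => (hf x (interior_subset hx)).mono interior_subset) hf'₀

lemma antitoneOn_of_hasDerivWithinAt_self_nonpos (hD : Convex ℝ D)
    (hf : ∀ x ∈ D, HasDerivWithinAt f (f' x) D x) (hf'₀ : ∀ x ∈ interior D, f' x ≤ 0) :
    AntitoneOn f D :=
  antitoneOn_of_hasDerivWithinAt_nonpos hD (fun x hx => (hf x hx).continuousWithinAt)
    (fun x hx => (hf x (interior_subset hx)).mono interior_subset) hf'₀

end Monotonicity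

section MassShell

variable {Ω pu pv du dv R l e₀ K : ℝ}

lemma inv_le_div_sq_of_le {e x : ℝ} (he : 0 < e) (hx : e ≤ x) : x⁻¹ ≤ x / e ^ 2 := by
  calc x⁻¹ ≤ e⁻¹ := inv_anti₀ he hx
    _ = e / e ^ 2 := by field_simp
    _ ≤ x / e ^ 2 := by gcongr

lemma mul_le_two_mul_neg_deriv_along (hpu : pu < 0) (hdu : 0 < du) (hK : 0 ≤ K)
    (h2 : Ω / (-pu) ≤ K) (h3 : pv * dv ≤ 1 / 2 * (-pu) * du) :
    Ω * du ≤ 2 * K * (-(pu * du + pv * dv)) := by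
  have hΩ : Ω ≤ K * (-pu) := (div_le_iff₀ (neg_pos.2 hpu)).1 h2
  calc Ω * du ≤ K * (-pu) * du := by gcongr
    _ ≤ 2 * K * (-(pu * du + pv * dv)) := by nlinarith

lemma dv_le_of_mass_shell (he : 0 < e₀) (hK : 0 ≤ K) (hR : 0 < R) (hpu : pu < 0) (hdu : 0 < du)
    (hshell : Ω * du * dv = l ^ 2 / R ^ 2) (h1 : e₀ ≤ Ω * du) (h2 : Ω / (-pu) ≤ K)
    (h3 : pv * dv ≤ 1 / 2 * (-pu) * du) :
    dv ≤ 2 * K * l ^ 2 / e₀ ^ 2 * (-(pu * du + pv * dv) / R ^ 2) := by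
  have hE : 0 < Ω * du := he.trans_le h1
  calc dv = l ^ 2 / R ^ 2 * (Ω * du)⁻¹ := by
        rw [← div_eq_mul_inv, eq_div_iff hE.ne', ← hshell]; ring
    _ ≤ l ^ 2 / R ^ 2 * (Ω * du / e₀ ^ 2) := by gcongr; exact inv_le_div_sq_of_le he h1
    _ ≤ l ^ 2 / R ^ 2 * (2 * K * (-(pu * du + pv * dv)) / e₀ ^ 2) := by
      gcongr _ * (?_ / _); exact mul_le_two_mul_neg_deriv_along hpu hdu hK h2 h3
    _ = 2 * K * l ^ 2 / e₀ ^ 2 * (-(pu * du + pv * dv) / R ^ 2) := by ring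

end MassShell

theorem ingoing_null_curve_displacement_estimate_general
    (Udom : Set (ℝ × ℝ)) (hopen : IsOpen Udom)
    (r Ω2 : ℝ → ℝ → ℝ)
    (hrpos : ∀ p ∈ Udom, 0 < r p.1 p.2)
    (hrs : ContDiffOn ℝ (⊤ : ℕ∞) (fun p : ℝ × ℝ => r p.1 p.2) Udom)
    (hdur : ∀ p ∈ Udom, pdu r p.1 p.2 < 0)
    (s₀ s₁ : ℝ) (hs : s₀ ≤ s₁) (gu gv du dv : ℝ → ℝ) (l e₀ K : ℝ)
    (he : 0 < e₀) (hK : 0 < K)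
    (hmem : ∀ s ∈ Icc s₀ s₁, (gu s, gv s) ∈ Udom)
    (hdu : ∀ s ∈ Icc s₀ s₁, 0 < du s)
    (hgu : ∀ s ∈ Icc s₀ s₁, HasDerivWithinAt gu (du s) (Icc s₀ s₁) s)
    (hgv : ∀ s ∈ Icc s₀ s₁, HasDerivWithinAt gv (dv s) (Icc s₀ s₁) s)
    (hshell : ∀ s ∈ Icc s₀ s₁,
      Ω2 (gu s) (gv s) * du s * dv s = l ^ 2 / (r (gu s) (gv s)) ^ 2)
    (h1 : ∀ s ∈ Icc s₀ s₁, e₀ ≤ Ω2 (gu s) (gv s) * du s)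
    (h2 : ∀ s ∈ Icc s₀ s₁,
      Ω2 (gu s) (gv s) / (-pdu r (gu s) (gv s)) ≤ K)
    (h3 : ∀ s ∈ Icc s₀ s₁,
      pdv r (gu s) (gv s) * dv s ≤ 1 / 2 * (-pdu r (gu s) (gv s)) * du s) :
    StrictAntiOn (fun s => r (gu s) (gv s)) (Icc s₀ s₁) ∧
      gv s₁ - gv s₀ ≤ 2 * K * l ^ 2 / (e₀ ^ 2 * r (gu s₁) (gv s₁)) := by
  set R := fun s => r (gu s) (gv s)
  set R' := fun s => pdu r (gu s) (gv s) * du s + pdv r (gu s) (gv s) * dv s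
  set C := 2 * K * l ^ 2 / e₀ ^ 2
  have hRpos : ∀ s ∈ Icc s₀ s₁, 0 < R s := fun s hs => hrpos _ (hmem s hs)
  have hR : ∀ s ∈ Icc s₀ s₁, HasDerivWithinAt R (R' s) (Icc s₀ s₁) s := fun s hs =>
    ((hrs.contDiffAt (hopen.mem_nhds (hmem s hs))).differentiableAt (by simp))
      |>.hasDerivWithinAt_comp_curve (hgu s hs) (hgv s hs)
  have hR'neg : ∀ s ∈ Icc s₀ s₁, R' s < 0 := fun s hs => by
    nlinarith [h3 s hs, hdur _ (hmem s hs), hdu s hs]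
  have hdv : ∀ s ∈ Icc s₀ s₁, dv s ≤ C * (-R' s / R s ^ 2) := fun s hs =>
    dv_le_of_mass_shell he hK.le (hRpos s hs) (hdur _ (hmem s hs)) (hdu s hs) (hshell s hs)
      (h1 s hs) (h2 s hs) (h3 s hs)
  have hanti : AntitoneOn (fun s => gv s - C * (R s)⁻¹) (Icc s₀ s₁) :=
    antitoneOn_of_hasDerivWithinAt_self_nonpos (convex_Icc s₀ s₁)
      (fun s hs => (hgv s hs).sub (((hR s hs).inv (hRpos s hs).ne').const_mul C))
      (fun s hs => sub_nonpos.2 (hdv s (interior_subset hs)))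
  refine ⟨strictAntiOn_of_hasDerivWithinAt_self_neg (convex_Icc s₀ s₁) hR
    fun s hs => hR'neg s (interior_subset hs), ?_⟩
  have hends := hanti (left_mem_Icc.2 hs) (right_mem_Icc.2 hs) hs
  have hC₀ : 0 ≤ C * (R s₀)⁻¹ := by have := hRpos s₀ (left_mem_Icc.2 hs); positivity
  calc gv s₁ - gv s₀ ≤ C * (R s₁)⁻¹ := by linarith
    _ = 2 * K * l ^ 2 / (e₀ ^ 2 * r (gu s₁) (gv s₁)) := by simp only [C, R]; ring

/-- **Displacement estimate for an ingoing nearly radial null curve** (the estimate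
underlying the trapped-surface formation argument for the outermost Vlasov beam in the
spherically symmetric Einstein–massless Vlasov system). Along a future-directed null
curve with angular momentum `l > 0` on which `Ω²γ̇ᵘ ≥ e₀`, `Ω²/(−∂_u r) ≤ K` and
`∂_v r·γ̇ᵛ ≤ (1/2)(−∂_u r)·γ̇ᵘ`, the area-radius `r` is strictly decreasing and the
advance in `v` is bounded by `2K·l²/(e₀²·r(γ(s₁)))`. -/
theorem ingoing_null_curve_displacement_estimate
    (Udom : Set (ℝ × ℝ)) (hopen : IsOpen Udom)
    (r Ω2 : ℝ → ℝ → ℝ)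
    (hrpos : ∀ p ∈ Udom, 0 < r p.1 p.2) (hΩpos : ∀ p ∈ Udom, 0 < Ω2 p.1 p.2)
    (hrs : ContDiffOn ℝ (⊤ : ℕ∞) (fun p : ℝ × ℝ => r p.1 p.2) Udom)
    (hΩs : ContDiffOn ℝ (⊤ : ℕ∞) (fun p : ℝ × ℝ => Ω2 p.1 p.2) Udom)
    (hdur : ∀ p ∈ Udom, pdu r p.1 p.2 < 0)
    (s₀ s₁ : ℝ) (hs : s₀ ≤ s₁) (gu gv du dv : ℝ → ℝ) (l e₀ K : ℝ)
    (hl : 0 < l) (he : 0 < e₀) (hK : 0 < K)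
    (hmem : ∀ s ∈ Icc s₀ s₁, (gu s, gv s) ∈ Udom)
    (hdu : ∀ s ∈ Icc s₀ s₁, 0 < du s) (hdv : ∀ s ∈ Icc s₀ s₁, 0 < dv s)
    (hduc : ContinuousOn du (Icc s₀ s₁)) (hdvc : ContinuousOn dv (Icc s₀ s₁))
    (hgu : ∀ s ∈ Icc s₀ s₁, HasDerivWithinAt gu (du s) (Icc s₀ s₁) s)
    (hgv : ∀ s ∈ Icc s₀ s₁, HasDerivWithinAt gv (dv s) (Icc s₀ s₁) s)
    (hshell : ∀ s ∈ Icc s₀ s₁,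
      Ω2 (gu s) (gv s) * du s * dv s = l ^ 2 / (r (gu s) (gv s)) ^ 2)
    (h1 : ∀ s ∈ Icc s₀ s₁, e₀ ≤ Ω2 (gu s) (gv s) * du s)
    (h2 : ∀ s ∈ Icc s₀ s₁,
      Ω2 (gu s) (gv s) / (-pdu r (gu s) (gv s)) ≤ K)
    (h3 : ∀ s ∈ Icc s₀ s₁,
      pdv r (gu s) (gv s) * dv s ≤ 1 / 2 * (-pdu r (gu s) (gv s)) * du s) :
    StrictAntiOn (fun s => r (gu s) (gv s)) (Icc s₀ s₁) ∧
      gv s₁ - gv s₀ ≤ 2 * K * l ^ 2 / (e₀ ^ 2 * r (gu s₁) (gv s₁)) :=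
  ingoing_null_curve_displacement_estimate_general Udom hopen r Ω2 hrpos hrs hdur s₀ s₁ hs gu gv du
    dv l e₀ K he hK hmem hdu hgu hgv hshell h1 h2 h3

end
end

section
/- For every real number a ≥ 1 and every integer N with N ≥ 4a, the following two-sided bound holds: 1/4 ≤ Σ_{j=0}^{N−1} (a/N)·e^{−2ja/N} ≤ 1. -/
/-!
With `x = 2a/N` the sum is `(x/2) · S`, where `S = ∑_{j<N} e^{-jx}` is a geometric sum, so
`(1 - e^{-x}) S = 1 - e^{-Nx} = 1 - e^{-2a}`. The elementary bounds
`x/(1+x) ≤ 1 - e^{-x} ≤ x` then squeeze `x S` between `1 - e^{-2a} ≥ 1/2` and `1 + x ≤ 2`.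
-/

open Finset Real

namespace Real

theorem one_sub_exp_neg_mul_sum_exp_neg_nat_mul (x : ℝ) (N : ℕ) :
    (1 - exp (-x)) * ∑ j ∈ range N, exp (-(j * x)) = 1 - exp (-(N * x)) := by
  simp only [← mul_neg, exp_nat_mul, mul_neg_geom_sum]

theorem one_sub_exp_neg_nat_mul_le_mul_sum_exp_neg (x : ℝ) (N : ℕ) :
    1 - exp (-(N * x)) ≤ x * ∑ j ∈ range N, exp (-(j * x)) := by
  rw [← one_sub_exp_neg_mul_sum_exp_neg_nat_mul]
  gcongr
  linarith [one_sub_le_exp_neg x]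

theorem mul_sum_exp_neg_nat_mul_le_one_add {x : ℝ} (hx : 0 ≤ x) (N : ℕ) :
    x * ∑ j ∈ range N, exp (-(j * x)) ≤ 1 + x := by
  have hratio : (1 + x) * exp (-x) ≤ 1 := by
    rw [exp_neg, ← div_eq_mul_inv, div_le_one (exp_pos x)]
    linarith [add_one_le_exp x]
  calc x * ∑ j ∈ range N, exp (-(j * x))
      ≤ (1 + x) * (1 - exp (-x)) * ∑ j ∈ range N, exp (-(j * x)) := by
        gcongr
        linarith
    _ = (1 + x) * (1 - exp (-(N * x))) := by
        rw [mul_assoc, one_sub_exp_neg_mul_sum_exp_neg_nat_mul]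
    _ ≤ 1 + x := by
        have := exp_pos (-(N * x))
        nlinarith

end Real

/-- **Riemann-sum estimate for the intermediate beam profile.**
For every real `a ≥ 1` and every integer `N ≥ 4a`, the total normalized energy content
`Σ_{j=0}^{N−1} (a/N)·e^{−2ja/N}` of the intermediate beam profile satisfies the two-sided
bound `1/4 ≤ Σ ≤ 1`. -/
theorem beam_profile_total_energy_bounds (a : ℝ) (ha : 1 ≤ a) (N : ℕ)
    (hN : 4 * a ≤ (N : ℝ)) :
    1 / 4 ≤ ∑ j ∈ Finset.range N, a / N * Real.exp (-(2 * (j : ℝ) * a / N)) ∧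
      ∑ j ∈ Finset.range N, a / N * Real.exp (-(2 * (j : ℝ) * a / N)) ≤ 1 := by
  have hN0 : (0 : ℝ) < N := by linarith
  set x := 2 * a / N with hx_def
  have hx : 0 ≤ x := by positivity
  have hx_le : x ≤ 1 := by rw [hx_def, div_le_one hN0]; linarith
  have hNx : N * x = 2 * a := by rw [hx_def]; field_simp
  have hsum : ∑ j ∈ range N, a / N * exp (-(2 * (j : ℝ) * a / N))
      = (x * ∑ j ∈ range N, exp (-(j * x))) / 2 := by
    rw [mul_sum, sum_div]
    refine sum_congr rfl fun j _ => ?_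
    rw [hx_def]; ring_nf
  have htail : exp (-(2 * a)) ≤ 1 / 2 := by
    rw [exp_neg, inv_le_comm₀ (exp_pos _) (by norm_num)]
    linarith [add_one_le_exp (2 * a)]
  rw [hsum]
  constructor
  · have := one_sub_exp_neg_nat_mul_le_mul_sum_exp_neg x N
    rw [hNx] at this
    linarith
  · linarith [mul_sum_exp_neg_nat_mul_le_one_add hx N]
end
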